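/- Let g : ℝ² → ℝ, g(x₁,x₂) = x₁² − x₂, with feasible set S = {x ∈ ℝ² : x₁² − x₂ ≤ 0}, x̄ = (0,0) and d = (0,0). Then (1,z₂) ∈ A(x̄,d) for every z₂ > 0, while (1,0) ∉ A(x̄,d); consequently the set A(x̄,d) is not closed. -/

import Mathlib

/-!
Since `d = 0`, membership of `z` in `A(0,0)` only asks that `g((t²/2) z) ≤ 0` for small `t > 0`.
On the line `z = (1, b)` this reads `s² ≤ s b` for all small `s = t²/2 > 0`, i.e. `0 < b`.
So the preimage of `A(0,0)` under the continuous map `b ↦ (1, b)` is the open ray `(0, ∞)`,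
which is not closed, hence neither is `A(0,0)`.
-/

open Set Filter Topology

noncomputable section

/-- The set `A(x,d)` for the constraints `g`. -/
def setA {s : ℕ} (m : ℕ) (g : Fin m → (Fin s → ℝ) → ℝ) (x d : Fin s → ℝ) :
    Set (Fin s → ℝ) :=
  {z | ∀ i, g i x = 0 → fderiv ℝ (g i) x d = 0 →
    ∃ δ > 0, ∀ t ∈ Ioo (0 : ℝ) δ, g i (x + t • d + (t ^ 2 / 2) • z) ≤ 0}

theorem mem_setA_zero_iff {s m : ℕ} {g : Fin m → (Fin s → ℝ) → ℝ} {x z : Fin s → ℝ} :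
    z ∈ setA m g x 0 ↔
      ∀ i, g i x = 0 → ∃ δ > 0, ∀ t ∈ Ioo (0 : ℝ) δ, g i (x + (t ^ 2 / 2) • z) ≤ 0 := by
  simp [setA]

theorem exists_forall_Ioo_sq_sub_mul_nonpos_iff (b : ℝ) :
    (∃ δ > 0, ∀ t ∈ Ioo (0 : ℝ) δ, (t ^ 2 / 2) ^ 2 - t ^ 2 / 2 * b ≤ 0) ↔ 0 < b := by
  constructor
  · rintro ⟨δ, hδ, h⟩
    have hs : 0 < (δ / 2) ^ 2 / 2 := by positivity
    have := h (δ / 2) ⟨by linarith, by linarith⟩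
    nlinarith
  · intro hb
    refine ⟨√(2 * b), by positivity, fun t ⟨ht, htδ⟩ => ?_⟩
    have ht2 : t ^ 2 < 2 * b := by
      simpa using (Real.lt_sqrt ht.le).mp htδ
    nlinarith [sq_nonneg t]

theorem vecCons_one_mem_setA_parabola_iff (b : ℝ) :
    ![1, b] ∈ setA 1 (fun _ (x : Fin 2 → ℝ) => x 0 ^ 2 - x 1) 0 0 ↔ 0 < b := by
  simp [mem_setA_zero_iff, ← exists_forall_Ioo_sq_sub_mul_nonpos_iff b]

/-- for the single constraint `g(x₁,x₂) = x₁² − x₂`, `x̄ = (0,0)`, `d = (0,0)`: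
`(1,z₂) ∈ A(x̄,d)` for every `z₂ > 0`, while `(1,0) ∉ A(x̄,d)`; consequently `A(x̄,d)`
is not closed. -/
theorem statement4 :
    (∀ z₂ : ℝ, 0 < z₂ →
      ![1, z₂] ∈ setA 1 (fun _ (x : Fin 2 → ℝ) => (x 0) ^ 2 - x 1) 0 0) ∧
    ![1, 0] ∉ setA 1 (fun _ (x : Fin 2 → ℝ) => (x 0) ^ 2 - x 1) 0 0 ∧
    ¬ IsClosed (setA 1 (fun _ (x : Fin 2 → ℝ) => (x 0) ^ 2 - x 1) 0 0) := by
  refine ⟨fun z₂ => (vecCons_one_mem_setA_parabola_iff z₂).mpr,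
    fun h => lt_irrefl 0 ((vecCons_one_mem_setA_parabola_iff 0).mp h), fun hA => ?_⟩
  have hline : Continuous fun b : ℝ => (![1, b] : Fin 2 → ℝ) := by fun_prop
  have hIoi : IsClosed (Ioi (0 : ℝ)) := by
    convert hA.preimage hline
    ext b
    exact (vecCons_one_mem_setA_parabola_iff b).symm
  have h0 : (0 : ℝ) ∈ closure (Ioi 0) := by
    rw [closure_Ioi]
    exact self_mem_Ici
  rw [hIoi.closure_eq] at h0
  exact lt_irrefl (0 : ℝ) h0
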